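/- arXiv:math/0108037 — 4 statements merged into one kernel-verified Lean document; each statement's English description precedes it below -/
import Mathlib

section
/- The six unprojection relations R₁, …, R₆ satisfy the two 4-term syzygies coming from the first two rows of M: x·R₁ + y·R₂ + z·R₃ + t·R₄ = 0 and y·R₁ + z·(R₂ − x·R₄) + t·R₅ + x²·R₆ = 0, as identities in the polynomial ring ℂ[x,y,z,t,s₀,s₁,s₂]. -/
noncomputable section

open MvPolynomial

namespace Reid

/-- The polynomial ring `ℂ[x,y,z,t,s₀,s₁,s₂]`. -/
abbrev C : Type := MvPolynomial (Fin 7) ℂ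

def x : C := X 0
def y : C := X 1
def z : C := X 2
def t : C := X 3
def s₀ : C := X 4
def s₁ : C := X 5
def s₂ : C := X 6

def R₁ : C := -(t * s₂) - x * z * s₁ + z ^ 2 * s₀ - x ^ 3 * y - x ^ 2 * t
def R₂ : C := t * s₁ - y * z * s₀ + x ^ 4 + x * z ^ 2
def R₃ : C := x ^ 2 * s₁ + (y ^ 2 - x * z) * s₀ - x * y * z - z * t
def R₄ : C := x * s₂ - y * s₁ + x ^ 3 + z ^ 2
def R₅ : C := y * s₂ - z * s₁ + x ^ 2 * s₀ + 2 * x ^ 2 * y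
def R₆ : C := z * s₂ - t * s₀ + x * y ^ 2 - y * t

/-- The two 4-term syzygies between `R₁, …, R₆` coming from the first two rows of `M`. -/
theorem two_syzygies :
    x * R₁ + y * R₂ + z * R₃ + t * R₄ = 0 ∧
    y * R₁ + z * (R₂ - x * R₄) + t * R₅ + x ^ 2 * R₆ = 0 := by
  constructor <;> (simp only [R₁,R₂,R₃,R₄,R₅,R₆]; ring)

end Reid
end
end

section
/- The identity s₁·R₄ + y·S₀ + z·R₅ = x·S₁ holds in the polynomial ring ℂ[x,y,z,t,s₀,s₁,s₂]; in particular every term of s₁·R₄ + y·S₀ + z·R₅ is divisible by x, and dividing out x yields the quadratic unprojection relation S₁. -/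
noncomputable section

open MvPolynomial

namespace Reid

def S₀ : C := s₁ ^ 2 - x * s₀ ^ 2 - x * y * s₀ - z * s₂
def S₁ : C := s₁ * s₂ - y * s₀ ^ 2 - (y ^ 2 - x * z) * s₀ + x ^ 2 * s₁ + 2 * x * y * z

theorem syzygy_gives_S1 :
    s₁ * R₄ + y * S₀ + z * R₅ = x * S₁ ∧ x ∣ (s₁ * R₄ + y * S₀ + z * R₅) := by
  constructor
  · unfold R₄ R₅ S₀ S₁; ring
  · refine ⟨S₁, ?_⟩; unfold R₄ R₅ S₀ S₁; ring

end Reid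
end
end

section
/- Modulo the ideal of ℂ[x,y,z,t,s₀,s₁,s₂] generated by R₁, R₂, R₃, R₄, R₅, R₆, the following congruences hold: f·s₀ ≡ −3x³yz + x²y³ − x²zt − yt², g·s₀ ≡ x⁶ + x³z² + xyzt + zt², and h·s₀ ≡ −x⁵y + 2x²yz² − xy³z + xz²t − y²zt, where f = x³z + xyt − z³ + t², g = x²yz − xzt + y²t, h = x⁵ − x²z² + 2xy²z − y⁴. -/
noncomputable section

open MvPolynomial

namespace Reid

def f : C := x ^ 3 * z + x * y * t - z ^ 3 + t ^ 2
def g : C := x ^ 2 * y * z - x * z * t + y ^ 2 * t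
def h : C := x ^ 5 - x ^ 2 * z ^ 2 + 2 * x * y ^ 2 * z - y ^ 4

/-- The ideal generated by the six linear unprojection relations. -/
def I : Ideal C := Ideal.span {R₁, R₂, R₃, R₄, R₅, R₆}


lemma hR₁ : R₁ ∈ I := Ideal.subset_span (by simp [Set.mem_insert_iff])
lemma hR₂ : R₂ ∈ I := Ideal.subset_span (by simp [Set.mem_insert_iff])
lemma hR₃ : R₃ ∈ I := Ideal.subset_span (by simp [Set.mem_insert_iff])
lemma hR₄ : R₄ ∈ I := Ideal.subset_span (by simp [Set.mem_insert_iff])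
lemma hR₅ : R₅ ∈ I := Ideal.subset_span (by simp [Set.mem_insert_iff])
lemma hR₆ : R₆ ∈ I := Ideal.subset_span (by simp [Set.mem_insert_iff])

/-- `f·s₀`, `g·s₀`, `h·s₀` modulo the ideal `(R₁, …, R₆)`. -/
theorem fgh_times_s0_mod_relations :
    f * s₀ - (-(3 * x ^ 3 * y * z) + x ^ 2 * y ^ 3 - x ^ 2 * z * t - y * t ^ 2) ∈ I ∧
    g * s₀ - (x ^ 6 + x ^ 3 * z ^ 2 + x * y * z * t + z * t ^ 2) ∈ I ∧
    h * s₀ - (-(x ^ 5 * y) + 2 * x ^ 2 * y * z ^ 2 - x * y ^ 3 * z + x * z ^ 2 * t - y ^ 2 * z * t) ∈ I := by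
  refine ⟨?_, ?_, ?_⟩
  · have e : f * s₀ - (-(3 * x ^ 3 * y * z) + x ^ 2 * y ^ 3 - x ^ 2 * z * t - y * t ^ 2)
        = (-z) * R₁ + (x * z) * R₅ + (-t - x * y) * R₆ := by
      simp only [f,x,y,z,t,s₀,s₁,s₂,R₁,R₅,R₆]; ring
    rw [e]
    exact add_mem (add_mem (I.mul_mem_left _ hR₁) (I.mul_mem_left _ hR₅)) (I.mul_mem_left _ hR₆)
  · have e : g * s₀ - (x ^ 6 + x ^ 3 * z ^ 2 + x * y * z * t + z * t ^ 2)
        = (-(x ^ 2)) * R₂ + t * R₃ := by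
      simp only [g,x,y,z,t,s₀,s₁,s₂,R₂,R₃]; ring
    rw [e]
    exact add_mem (I.mul_mem_left _ hR₂) (I.mul_mem_left _ hR₃)
  · have e : h * s₀ - (-(x ^ 5 * y) + 2 * x ^ 2 * y * z ^ 2 - x * y ^ 3 * z + x * z ^ 2 * t - y ^ 2 * z * t)
        = (x * z - y ^ 2) * R₃ + (-(x ^ 2 * y)) * R₄ + x ^ 3 * R₅ := by
      simp only [h,x,y,z,t,s₀,s₁,s₂,R₃,R₄,R₅]; ring
    rw [e]
    exact add_mem (add_mem (I.mul_mem_left _ hR₃) (I.mul_mem_left _ hR₄)) (I.mul_mem_left _ hR₅)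

end Reid
end
end

section
/- Each of the eight polynomials R₁, R₂, R₃, R₄, R₅, S₀, S₁, S₂ equals, up to sign, one of the fifteen 4×4 Pfaffians Pf_{ij.kl} = a_{ij}a_{kl} − a_{ik}a_{jl} + a_{il}a_{jk} (i<j<k<l in {1,…,6}) of the 6×6 skew-symmetric matrix with upper-triangular entries a₁₂ = x, a₁₃ = y, a₁₄ = z, a₁₅ = s₁, a₁₆ = t, a₂₃ = z, a₂₄ = s₁, a₂₅ = s₂, a₂₆ = y·s₀ − xz, a₃₄ = s₂ + x², a₃₅ = −x·s₀ − 2xy, a₃₆ = −x·s₁ + z·s₀, a₄₅ = −s₀² − y·s₀, a₄₆ = x³, a₅₆ = s₀s₂ + x²·s₀ + x²y + xt. -/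
noncomputable section

open MvPolynomial

namespace Reid

def S₂ : C := s₂ ^ 2 - z * s₀ ^ 2 + x * s₀ * s₁ - y * z * s₀ + 2 * x * y * s₁ + x ^ 2 * s₂

/-- The 6×6 skew-symmetric matrix whose 4×4 Pfaffians give the relations. -/
def a : Matrix (Fin 6) (Fin 6) C :=
  !![0, x, y, z, s₁, t;
     -x, 0, z, s₁, s₂, y * s₀ - x * z;
     -y, -z, 0, s₂ + x ^ 2, -(x * s₀) - 2 * x * y, -(x * s₁) + z * s₀;
     -z, -s₁, -(s₂ + x ^ 2), 0, -s₀ ^ 2 - y * s₀, x ^ 3;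
     -s₁, -s₂, -(-(x * s₀) - 2 * x * y), -(-s₀ ^ 2 - y * s₀), 0,
       s₀ * s₂ + x ^ 2 * s₀ + x ^ 2 * y + x * t;
     -t, -(y * s₀ - x * z), -(-(x * s₁) + z * s₀), -x ^ 3,
       -(s₀ * s₂ + x ^ 2 * s₀ + x ^ 2 * y + x * t), 0]

/-- The 4×4 Pfaffian `Pf_{ij.kl} = a_{ij}a_{kl} − a_{ik}a_{jl} + a_{il}a_{jk}`. -/
def Pf (i j k l : Fin 6) : C := a i j * a k l - a i k * a j l + a i l * a j k

lemma a01 : a 0 1 = x := rfl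
lemma a02 : a 0 2 = y := rfl
lemma a03 : a 0 3 = z := rfl
lemma a04 : a 0 4 = s₁ := rfl
lemma a05 : a 0 5 = t := rfl
lemma a12 : a 1 2 = z := rfl
lemma a13 : a 1 3 = s₁ := rfl
lemma a14 : a 1 4 = s₂ := rfl
lemma a15 : a 1 5 = y * s₀ - x * z := rfl
lemma a23 : a 2 3 = s₂ + x ^ 2 := rfl
lemma a24 : a 2 4 = -(x * s₀) - 2 * x * y := rfl
lemma a25 : a 2 5 = -(x * s₁) + z * s₀ := rfl
lemma a34 : a 3 4 = -s₀ ^ 2 - y * s₀ := rfl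
lemma a35 : a 3 5 = x ^ 3 := rfl
lemma a45 : a 4 5 = s₀ * s₂ + x ^ 2 * s₀ + x ^ 2 * y + x * t := rfl

/-- Each of `R₁, …, R₅, S₀, S₁, S₂` is, up to sign, one of the fifteen 4×4 Pfaffians
of the skew matrix `a`. -/
theorem relations_are_pfaffians :
    ∀ Q ∈ ({R₁, R₂, R₃, R₄, R₅, S₀, S₁, S₂} : Set C),
      ∃ i j k l : Fin 6, i < j ∧ j < k ∧ k < l ∧ (Q = Pf i j k l ∨ Q = -Pf i j k l) := by
  intro Q hQ
  simp only [Set.mem_insert_iff, Set.mem_singleton_iff] at hQ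
  rcases hQ with rfl | rfl | rfl | rfl | rfl | rfl | rfl | rfl
  · exact ⟨0, 2, 3, 5, by decide, by decide, by decide, Or.inr (by simp [R₁, Pf, a01, a02, a03, a04, a05, a12, a13, a14, a15, a23, a24, a25, a34, a35, a45]; ring)⟩
  · exact ⟨0, 1, 3, 5, by decide, by decide, by decide, Or.inl (by simp [R₂, Pf, a01, a02, a03, a04, a05, a12, a13, a14, a15, a23, a24, a25, a34, a35, a45]; ring)⟩
  · exact ⟨0, 1, 2, 5, by decide, by decide, by decide, Or.inr (by simp [R₃, Pf, a01, a02, a03, a04, a05, a12, a13, a14, a15, a23, a24, a25, a34, a35, a45]; ring)⟩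
  · exact ⟨0, 1, 2, 3, by decide, by decide, by decide, Or.inl (by simp [R₄, Pf, a01, a02, a03, a04, a05, a12, a13, a14, a15, a23, a24, a25, a34, a35, a45]; ring)⟩
  · exact ⟨0, 1, 2, 4, by decide, by decide, by decide, Or.inr (by simp [R₅, Pf, a01, a02, a03, a04, a05, a12, a13, a14, a15, a23, a24, a25, a34, a35, a45]; ring)⟩
  · exact ⟨0, 1, 3, 4, by decide, by decide, by decide, Or.inl (by simp [S₀, Pf, a01, a02, a03, a04, a05, a12, a13, a14, a15, a23, a24, a25, a34, a35, a45]; ring)⟩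
  · exact ⟨0, 2, 3, 4, by decide, by decide, by decide, Or.inl (by simp [S₁, Pf, a01, a02, a03, a04, a05, a12, a13, a14, a15, a23, a24, a25, a34, a35, a45]; ring)⟩
  · exact ⟨1, 2, 3, 4, by decide, by decide, by decide, Or.inl (by simp [S₂, Pf, a01, a02, a03, a04, a05, a12, a13, a14, a15, a23, a24, a25, a34, a35, a45]; ring)⟩

end Reid
end
end
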